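/- Suppose there exist a symmetric positive definite matrix P ∈ ℝ^{n_x×n_x}, a matrix K₀ ∈ ℝ^{n_u×n_x}, and scalars α ∈ (0,1), ν > 0 such that Ψ + Γᵀ M(L) Γ ⪯ 0. Then the equilibrium x = 0 of the closed-loop system x_{t+1} = (A + B K₀) x_t + G φ(C_q x_t) is globally exponentially stable with decay rate α; explicitly, every trajectory satisfies ‖x_t‖ ≤ √(λ_max(P)/λ_min(P)) · αᵗ · ‖x₀‖ for all t ∈ ℕ and all x₀ ∈ ℝ^{n_x}. (Theorem 2.) -/

import Mathlib

/-!
`V x = xᵀ P x` is a Lyapunov function. Evaluating the LMI at the stacked vector `(x, φ (C_q x))`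
gives `V x⁺ - α² V x + ν⁻¹ (L² ‖C_q x‖² - ‖φ (C_q x)‖²) ≤ 0`, and the bracket is nonnegative
because `φ` is `L`-Lipschitz with `φ 0 = 0` (the S-procedure). Hence `V x_t ≤ α^{2t} V x₀`, and
`λ_min ‖x‖² ≤ V x ≤ λ_max ‖x‖²` turns this into the norm bound.
-/

open Matrix

/-- The Euclidean norm of a vector in `ℝ^k`. -/
noncomputable def eNorm {k : ℕ} (x : Fin k → ℝ) : ℝ := Real.sqrt (x ⬝ᵥ x)

lemma Matrix.sum_sq_star_mulVec_of_mem_unitaryGroup {n : Type*} [Fintype n] [DecidableEq n]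
    {U : Matrix n n ℝ} (hU : U ∈ unitaryGroup n ℝ) (x : n → ℝ) :
    ∑ i, (star U *ᵥ x) i ^ 2 = x ⬝ᵥ x := by
  have hUUt : U * Uᵀ = 1 := by
    simpa [star_eq_conjTranspose] using mem_unitaryGroup_iff.mp hU
  simp only [sq, ← dotProduct.eq_1, star_eq_conjTranspose, conjTranspose_eq_transpose_of_trivial]
  rw [dotProduct_mulVec, vecMul_transpose, mulVec_mulVec, hUUt, one_mulVec]

namespace Matrix.IsHermitian

variable {n : Type*} [Fintype n] [DecidableEq n] {A : Matrix n n ℝ} (hA : A.IsHermitian)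
include hA

lemma dotProduct_mulVec_eq_sum_eigenvalues (x : n → ℝ) :
    x ⬝ᵥ A *ᵥ x =
      ∑ i, hA.eigenvalues i * (star (hA.eigenvectorUnitary : Matrix n n ℝ) *ᵥ x) i ^ 2 := by
  conv_lhs => rw [hA.spectral_theorem, Unitary.conjStarAlgAut_apply]
  rw [← mulVec_mulVec, ← mulVec_mulVec, dotProduct_mulVec, ← mulVec_transpose,
    ← conjTranspose_eq_transpose_of_trivial, ← star_eq_conjTranspose]
  simp only [dotProduct, mulVec_diagonal, Function.comp_apply, RCLike.ofReal_real_eq_id, id]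
  exact Finset.sum_congr rfl fun i _ => by ring

lemma mul_dotProduct_le_dotProduct_mulVec {c : ℝ} (hc : ∀ i, c ≤ hA.eigenvalues i)
    (x : n → ℝ) : c * (x ⬝ᵥ x) ≤ x ⬝ᵥ A *ᵥ x := by
  rw [hA.dotProduct_mulVec_eq_sum_eigenvalues,
    ← sum_sq_star_mulVec_of_mem_unitaryGroup hA.eigenvectorUnitary.2, Finset.mul_sum]
  exact Finset.sum_le_sum fun i _ => mul_le_mul_of_nonneg_right (hc i) (sq_nonneg _)

lemma dotProduct_mulVec_le_mul_dotProduct {c : ℝ} (hc : ∀ i, hA.eigenvalues i ≤ c)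
    (x : n → ℝ) : x ⬝ᵥ A *ᵥ x ≤ c * (x ⬝ᵥ x) := by
  rw [hA.dotProduct_mulVec_eq_sum_eigenvalues,
    ← sum_sq_star_mulVec_of_mem_unitaryGroup hA.eigenvectorUnitary.2, Finset.mul_sum]
  exact Finset.sum_le_sum fun i _ => mul_le_mul_of_nonneg_right (hc i) (sq_nonneg _)

end Matrix.IsHermitian

lemma eNorm_sq {k : ℕ} (x : Fin k → ℝ) : eNorm x ^ 2 = x ⬝ᵥ x :=
  Real.sq_sqrt (Finset.sum_nonneg fun i _ => mul_self_nonneg (x i))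

lemma eNorm_nonneg {k : ℕ} (x : Fin k → ℝ) : 0 ≤ eNorm x := Real.sqrt_nonneg _

lemma dotProduct_self_le_of_lipschitz {m k : ℕ} {φ : (Fin m → ℝ) → Fin k → ℝ} (hφ0 : φ 0 = 0)
    {L : ℝ} (hφ : ∀ q₁ q₂, eNorm (φ q₁ - φ q₂) ≤ L * eNorm (q₁ - q₂)) (q : Fin m → ℝ) :
    φ q ⬝ᵥ φ q ≤ L ^ 2 * (q ⬝ᵥ q) := by
  have h := hφ q 0
  rw [hφ0, sub_zero, sub_zero] at h
  rw [← eNorm_sq, ← eNorm_sq, ← mul_pow]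
  exact pow_le_pow_left₀ (eNorm_nonneg _) h 2

lemma le_sqrt_div_mul {a d m M : ℝ} (hm : 0 < m) (hd : 0 ≤ d) (h : m * a ^ 2 ≤ M * d ^ 2) :
    a ≤ √(M / m) * d := by
  rw [← Real.sqrt_sq hd, ← Real.sqrt_mul' _ (sq_nonneg d)]
  refine Real.le_sqrt_of_sq_le ?_
  rw [div_mul_eq_mul_div, le_div_iff₀ hm]
  linarith

lemma dotProduct_transpose_mul_mul_mulVec {R l m n : Type*} [CommSemiring R]
    [Fintype l] [Fintype m] [Fintype n]
    (X : Matrix m l R) (P : Matrix m m R) (Y : Matrix m n R) (u : l → R) (v : n → R) :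
    u ⬝ᵥ (Xᵀ * P * Y) *ᵥ v = (X *ᵥ u) ⬝ᵥ P *ᵥ (Y *ᵥ v) := by
  rw [← mulVec_mulVec, ← mulVec_mulVec, dotProduct_mulVec, vecMul_transpose]

section LMI

variable {m n p : Type*} [Fintype m] [Fintype n] [Fintype p]

lemma sumElim_dotProduct_fromBlocks_mulVec_sumElim (S P : Matrix m m ℝ) (G : Matrix m n ℝ)
    (c : ℝ) (x : m → ℝ) (w : n → ℝ) :
    Sum.elim x w ⬝ᵥ fromBlocks (Sᵀ * P * S - c • P) (Sᵀ * P * G) (Gᵀ * P * S) (Gᵀ * P * G) *ᵥ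
        Sum.elim x w =
      (S *ᵥ x + G *ᵥ w) ⬝ᵥ P *ᵥ (S *ᵥ x + G *ᵥ w) - c * (x ⬝ᵥ P *ᵥ x) := by
  rw [fromBlocks_mulVec, sumElim_dotProduct_sumElim, sub_mulVec, smul_mulVec]
  simp only [dotProduct_add, add_dotProduct, dotProduct_sub, dotProduct_smul, mulVec_add,
    smul_eq_mul, dotProduct_transpose_mul_mul_mulVec, Sum.elim_comp_inl, Sum.elim_comp_inr]
  ring

lemma sumElim_dotProduct_multiplier_mulVec_sumElim [DecidableEq n] [DecidableEq p]
    (C : Matrix p m ℝ) (a b : ℝ) (x : m → ℝ) (w : n → ℝ) :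
    Sum.elim x w ⬝ᵥ ((fromBlocks C 0 0 (1 : Matrix n n ℝ))ᵀ *
        fromBlocks (a • (1 : Matrix p p ℝ)) 0 0 (-b • (1 : Matrix n n ℝ)) *
        fromBlocks C 0 0 (1 : Matrix n n ℝ)) *ᵥ Sum.elim x w =
      a * ((C *ᵥ x) ⬝ᵥ (C *ᵥ x)) - b * (w ⬝ᵥ w) := by
  rw [dotProduct_transpose_mul_mul_mulVec, fromBlocks_mulVec, fromBlocks_mulVec]
  simp only [zero_mulVec, add_zero, zero_add, one_mulVec, smul_mulVec,
    sumElim_dotProduct_sumElim, dotProduct_smul, smul_eq_mul, neg_mul,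
    Sum.elim_comp_inl, Sum.elim_comp_inr]
  ring

lemma lyapunov_step_of_LMI [DecidableEq n] [DecidableEq p] {S P : Matrix m m ℝ}
    {G : Matrix m n ℝ} {C : Matrix p m ℝ} {α ν L : ℝ} (hν : 0 ≤ ν)
    (hLMI : (-(fromBlocks (Sᵀ * P * S - α ^ 2 • P) (Sᵀ * P * G) (Gᵀ * P * S) (Gᵀ * P * G) +
        (fromBlocks C 0 0 (1 : Matrix n n ℝ))ᵀ *
          fromBlocks ((ν⁻¹ * L ^ 2) • (1 : Matrix p p ℝ)) 0 0 ((-ν⁻¹) • (1 : Matrix n n ℝ)) *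
          fromBlocks C 0 0 (1 : Matrix n n ℝ))).PosSemidef)
    {x : m → ℝ} {w : n → ℝ} (hw : w ⬝ᵥ w ≤ L ^ 2 * ((C *ᵥ x) ⬝ᵥ (C *ᵥ x))) :
    (S *ᵥ x + G *ᵥ w) ⬝ᵥ P *ᵥ (S *ᵥ x + G *ᵥ w) ≤ α ^ 2 * (x ⬝ᵥ P *ᵥ x) := by
  have h := hLMI.dotProduct_mulVec_nonneg (Sum.elim x w)
  rw [star_trivial, neg_mulVec, dotProduct_neg, add_mulVec, dotProduct_add,
    sumElim_dotProduct_fromBlocks_mulVec_sumElim, sumElim_dotProduct_multiplier_mulVec_sumElim]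
    at h
  have hslack : ν⁻¹ * (w ⬝ᵥ w) ≤ ν⁻¹ * L ^ 2 * ((C *ᵥ x) ⬝ᵥ (C *ᵥ x)) := by
    rw [mul_assoc]
    exact mul_le_mul_of_nonneg_left hw (inv_nonneg.mpr hν)
  linarith

end LMI

lemma eNorm_le_of_lyapunov_decrease {n : ℕ} {P : Matrix (Fin n) (Fin n) ℝ} (hP : P.PosDef)
    {α : ℝ} (hα : 0 ≤ α) {x : ℕ → Fin n → ℝ}
    (hx : ∀ k, x (k + 1) ⬝ᵥ P *ᵥ x (k + 1) ≤ α ^ 2 * (x k ⬝ᵥ P *ᵥ x k)) (t : ℕ) :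
    eNorm (x t) ≤
      √((⨆ i, hP.1.eigenvalues i) / ⨅ i, hP.1.eigenvalues i) * α ^ t * eNorm (x 0) := by
  rcases isEmpty_or_nonempty (Fin n) with _ | _
  · simp [eNorm]
  obtain ⟨i₀, hi₀⟩ := exists_eq_ciInf_of_finite (f := hP.1.eigenvalues)
  have hmin_pos : 0 < ⨅ i, hP.1.eigenvalues i := hi₀ ▸ hP.eigenvalues_pos i₀
  have hdecay := le_geom (u := fun k => x k ⬝ᵥ P *ᵥ x k) (sq_nonneg α) t fun k _ => hx k
  rw [mul_assoc]
  refine le_sqrt_div_mul hmin_pos (mul_nonneg (pow_nonneg hα t) (eNorm_nonneg _)) ?_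
  calc (⨅ i, hP.1.eigenvalues i) * eNorm (x t) ^ 2
      ≤ x t ⬝ᵥ P *ᵥ x t := by
        rw [eNorm_sq]
        exact hP.1.mul_dotProduct_le_dotProduct_mulVec
          (fun i => ciInf_le (Set.finite_range _).bddBelow i) _
    _ ≤ (α ^ 2) ^ t * (x 0 ⬝ᵥ P *ᵥ x 0) := hdecay
    _ ≤ (α ^ 2) ^ t * ((⨆ i, hP.1.eigenvalues i) * (x 0 ⬝ᵥ x 0)) := by
        gcongr
        exact hP.1.dotProduct_mulVec_le_mul_dotProduct
          (fun i => le_ciSup (Set.finite_range _).bddAbove i) _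
    _ = (⨆ i, hP.1.eigenvalues i) * (α ^ t * eNorm (x 0)) ^ 2 := by
        rw [mul_pow, eNorm_sq, ← pow_mul, ← pow_mul']
        ring

theorem globally_exponentially_stable_of_LMI_general
    {nx nu nφ nq : ℕ}
    (A : Matrix (Fin nx) (Fin nx) ℝ) (B : Matrix (Fin nx) (Fin nu) ℝ)
    (G : Matrix (Fin nx) (Fin nφ) ℝ) (Cq : Matrix (Fin nq) (Fin nx) ℝ)
    (K₀ : Matrix (Fin nu) (Fin nx) ℝ)
    (φ : (Fin nq → ℝ) → (Fin nφ → ℝ)) (hφ0 : φ 0 = 0)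
    (L : ℝ)
    (hφLip : ∀ q₁ q₂, eNorm (φ q₁ - φ q₂) ≤ L * eNorm (q₁ - q₂))
    (P : Matrix (Fin nx) (Fin nx) ℝ) (hP : P.PosDef)
    (α : ℝ) (hα : α ∈ Set.Ioo (0 : ℝ) 1) (ν : ℝ) (hν : 0 < ν)
    (hLMI :
      (-(Matrix.fromBlocks
          ((A + B * K₀)ᵀ * P * (A + B * K₀) - α ^ 2 • P)
          ((A + B * K₀)ᵀ * P * G)
          (Gᵀ * P * (A + B * K₀))
          (Gᵀ * P * G) +
        (Matrix.fromBlocks Cq 0 0 (1 : Matrix (Fin nφ) (Fin nφ) ℝ))ᵀ *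
          Matrix.fromBlocks ((ν⁻¹ * L ^ 2) • (1 : Matrix (Fin nq) (Fin nq) ℝ)) 0 0
            ((-ν⁻¹) • (1 : Matrix (Fin nφ) (Fin nφ) ℝ)) *
          Matrix.fromBlocks Cq 0 0 (1 : Matrix (Fin nφ) (Fin nφ) ℝ))).PosSemidef) :
    ∀ x : ℕ → (Fin nx → ℝ),
      (∀ t, x (t + 1) = (A + B * K₀).mulVec (x t) + G.mulVec (φ (Cq.mulVec (x t)))) →
      ∀ t : ℕ, eNorm (x t) ≤
        Real.sqrt ((⨆ i, hP.1.eigenvalues i) / (⨅ i, hP.1.eigenvalues i)) *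
          α ^ t * eNorm (x 0) := by
  intro x hx
  refine eNorm_le_of_lyapunov_decrease hP hα.1.le fun k => ?_
  rw [hx k]
  exact lyapunov_step_of_LMI hν.le hLMI (dotProduct_self_le_of_lipschitz hφ0 hφLip _)

/-- **Theorem 2.** If there exist `P ≻ 0`, `K₀`, `α ∈ (0,1)` and `ν > 0` with
`Ψ + Γᵀ M(L) Γ ⪯ 0`, then the origin of the closed-loop system
`x_{t+1} = (A + BK₀)x_t + Gφ(C_q x_t)` is globally exponentially stable with
decay rate `α`: every trajectory satisfies
`‖x_t‖ ≤ √(λ_max(P)/λ_min(P)) · αᵗ · ‖x₀‖`. -/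
theorem globally_exponentially_stable_of_LMI
    {nx nu nφ nq : ℕ}
    (A : Matrix (Fin nx) (Fin nx) ℝ) (B : Matrix (Fin nx) (Fin nu) ℝ)
    (G : Matrix (Fin nx) (Fin nφ) ℝ) (Cq : Matrix (Fin nq) (Fin nx) ℝ)
    (K₀ : Matrix (Fin nu) (Fin nx) ℝ)
    (φ : (Fin nq → ℝ) → (Fin nφ → ℝ)) (hφ0 : φ 0 = 0)
    (L : ℝ) (hL : 0 < L)
    (hφLip : ∀ q₁ q₂, eNorm (φ q₁ - φ q₂) ≤ L * eNorm (q₁ - q₂))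
    (P : Matrix (Fin nx) (Fin nx) ℝ) (hP : P.PosDef)
    (α : ℝ) (hα : α ∈ Set.Ioo (0 : ℝ) 1) (ν : ℝ) (hν : 0 < ν)
    (hLMI :
      (-(Matrix.fromBlocks
          ((A + B * K₀)ᵀ * P * (A + B * K₀) - α ^ 2 • P)
          ((A + B * K₀)ᵀ * P * G)
          (Gᵀ * P * (A + B * K₀))
          (Gᵀ * P * G) +
        (Matrix.fromBlocks Cq 0 0 (1 : Matrix (Fin nφ) (Fin nφ) ℝ))ᵀ *
          Matrix.fromBlocks ((ν⁻¹ * L ^ 2) • (1 : Matrix (Fin nq) (Fin nq) ℝ)) 0 0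
            ((-ν⁻¹) • (1 : Matrix (Fin nφ) (Fin nφ) ℝ)) *
          Matrix.fromBlocks Cq 0 0 (1 : Matrix (Fin nφ) (Fin nφ) ℝ))).PosSemidef) :
    ∀ x : ℕ → (Fin nx → ℝ),
      (∀ t, x (t + 1) = (A + B * K₀).mulVec (x t) + G.mulVec (φ (Cq.mulVec (x t)))) →
      ∀ t : ℕ, eNorm (x t) ≤
        Real.sqrt ((⨆ i, hP.1.eigenvalues i) / (⨅ i, hP.1.eigenvalues i)) *
          α ^ t * eNorm (x 0) :=
  globally_exponentially_stable_of_LMI_general A B G Cq K₀ φ hφ0 L hφLip P hP α hα ν hν hLMI
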